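/- arXiv:2208.02625 — 5 statements merged into one kernel-verified Lean document; each statement's English description precedes it below -/
import Mathlib

section
/- Fix integers f ≥ 1 and g with 0 ≤ g ≤ f. Define H(f, g, μ_1, μ_d) = C(f,g) − C(f−μ_1, g−μ_1) − C(f−μ_d, g) + C(f−μ_1−μ_d, g−μ_1), where C(a,b) is the binomial coefficient (zero when b < 0 or b > a). Then ∑_{d=1}^{f} ∑_{μ_1+⋯+μ_d = f, μ_i ≥ 1} ((−1)^d / (μ_1! ⋯ μ_d!)) · H(f, g, μ_1, μ_d) = 0. (When d = 1, μ_1 = μ_d = f.) -/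
/-!
Splitting off the first and the last block of a composition and using
`∑_{c ⊨ m} (-1)^ℓ(c) / ∏ cᵢ! = (-1)^m / m!`, the sum becomes a sum over the end blocks
`a`, `b` of `(-1)^(f-a-b) / (a! b! (f-a-b)!) · C(f-a-b, g-a)`, where `a = 0` (resp. `b = 0`)
carries the terms of `H` not involving `μ₁` (resp. `μ_d`), the signs in `H` cancelling those
of the end blocks. This summand factors as
`(-1)^f C(f,g) / f! · (-1)^a C(g,a) · (-1)^b C(f-g,b)`, so the sum is
`(-1)^f C(f,g) / f! · [g = 0] · [f - g = 0]`, which vanishes since `f ≠ 0`.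
-/

/-- Binomial coefficient on integers, interpreted as `0` when `b < 0` or `b > a`. -/
noncomputable def chooseZ (a b : ℤ) : ℝ :=
  if 0 ≤ b ∧ b ≤ a then (a.toNat.choose b.toNat : ℝ) else 0

open Finset
open scoped Nat

noncomputable def compositionWeight (l : List ℕ) : ℝ :=
  (-1) ^ l.length / ((l.map Nat.factorial).prod : ℝ)

lemma compositionWeight_cons (a : ℕ) (l : List ℕ) :
    compositionWeight (a :: l) = -1 / a ! * compositionWeight l := by
  simp [compositionWeight, pow_succ', div_mul_div_comm]

lemma compositionWeight_reverse (l : List ℕ) :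
    compositionWeight l.reverse = compositionWeight l := by
  simp [compositionWeight, List.map_reverse, List.prod_reverse]

lemma List.getLastD_reverse_zero (l : List ℕ) : l.reverse.getLastD 0 = l.headI := by
  rw [List.getLastD_eq_getLast?, List.getLast?_reverse]
  cases l <;> rfl

namespace Composition

variable {n : ℕ} {M : Type*} [AddCommMonoid M]

lemma blocks_eq_headI_cons_tail (hn : n ≠ 0) (c : Composition n) :
    c.blocks = c.blocks.headI :: c.blocks.tail := by
  obtain ⟨a, l, h⟩ := List.exists_cons_of_ne_nil (mt c.blocks_eq_nil.1 hn)
  simp [h]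

def cons {a : ℕ} (ha : 0 < a) (han : a ≤ n) (c : Composition (n - a)) : Composition n where
  blocks := a :: c.blocks
  blocks_pos hi := by
    rcases List.mem_cons.1 hi with rfl | hi
    exacts [ha, c.blocks_pos hi]
  blocks_sum := by rw [List.sum_cons, c.blocks_sum]; omega

def tail (c : Composition n) : Composition (n - c.blocks.headI) where
  blocks := c.blocks.tail
  blocks_pos hi := c.blocks_pos (List.mem_of_mem_tail hi)
  blocks_sum := by
    have := c.blocks_sum
    cases h : c.blocks <;> simp_all
    omega

theorem sum_eq_sum_Icc_sum_cons (hn : n ≠ 0) (F : List ℕ → M) :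
    ∑ c : Composition n, F c.blocks =
      ∑ a ∈ Icc 1 n, ∑ c : Composition (n - a), F (a :: c.blocks) := by
  rw [sum_sigma']
  refine sum_bij' (fun c _ => ⟨c.blocks.headI, c.tail⟩)
    (fun x hx => cons (mem_Icc.1 (mem_sigma.1 hx).1).1 (mem_Icc.1 (mem_sigma.1 hx).1).2 x.2)
    (fun c _ => ?_) (fun _ _ => mem_univ _) (fun c _ => ?_) (fun x _ => ?_) (fun c _ => ?_)
  · have hmem : c.blocks.headI ∈ c.blocks := by
      rw [c.blocks_eq_headI_cons_tail hn]
      exact List.mem_cons_self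
    simpa using ⟨c.one_le_blocks hmem, c.blocks_le hmem⟩
  · exact Composition.ext (c.blocks_eq_headI_cons_tail hn).symm
  · exact Sigma.ext rfl (heq_of_eq (Composition.ext rfl))
  · exact congrArg F (c.blocks_eq_headI_cons_tail hn)

theorem sum_eq_of_eq_zero (hn : n = 0) (F : List ℕ → M) :
    ∑ c : Composition n, F c.blocks = F [] := by
  subst hn
  simp [(blocks_eq_nil _).2 rfl, composition_card]

theorem sum_blocks_reverse (F : List ℕ → M) :
    ∑ c : Composition n, F c.blocks.reverse = ∑ c : Composition n, F c.blocks :=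
  Fintype.sum_bijective reverse reverse_bijective _ _ fun _ => rfl

end Composition

lemma chooseZ_natCast (m k : ℕ) : chooseZ m k = m.choose k := by
  unfold chooseZ
  split_ifs with h
  · simp
  · rw [Nat.choose_eq_zero_of_lt (by omega), Nat.cast_zero]

lemma chooseZ_eq_zero {a b : ℤ} (h : b < 0 ∨ a < b) : chooseZ a b = 0 :=
  if_neg (by omega)

lemma sum_Icc_neg_one_pow_mul_choose {m N : ℕ} (h : m ≤ N) :
    ∑ a ∈ Icc 1 N, (-1 : ℝ) ^ a * m.choose a = if m = 0 then 0 else -1 := by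
  have hfull : ∑ a ∈ range (N + 1), (-1 : ℝ) ^ a * m.choose a = if m = 0 then 1 else 0 := by
    rw [← sum_subset (range_subset_range.2 (by omega : m + 1 ≤ N + 1)) fun a _ ha => by
      rw [Nat.choose_eq_zero_of_lt (by simpa using ha), Nat.cast_zero, mul_zero]]
    exact_mod_cast Int.alternating_sum_range_choose
  rw [Nat.range_succ_eq_Icc_zero, ← insert_Icc_add_one_left_eq_Icc (Nat.zero_le N),
    sum_insert (by simp)] at hfull
  split_ifs at hfull ⊢ <;> simp at hfull <;> linarith

/-- For `1 ≤ a, b` and `a + b ≤ n`, the total `compositionWeight` of the compositions of `n` of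
length at least two with first block `a` and last block `b`; `endWeight n a 0` is minus the total
weight of those with first block `a`. -/
noncomputable def endWeight (n a b : ℕ) : ℝ :=
  (-1) ^ (n - a - b) / (a ! * b ! * (n - a - b)!)

/-- The number of `g`-subsets of `{1, …, f}` containing the first `a` and avoiding the
last `b` elements. -/
noncomputable def endChoose (f g a b : ℕ) : ℝ :=
  chooseZ ((f : ℤ) - a - b) ((g : ℤ) - a)

lemma endChoose_eq_zero {f g a b : ℕ} (h : f < a + b) : endChoose f g a b = 0 :=
  chooseZ_eq_zero (by omega)

lemma endWeight_mul_endChoose {f g : ℕ} (hg : g ≤ f) (a b : ℕ) :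
    endWeight f a b * endChoose f g a b =
      (-1) ^ f / f ! * f.choose g * ((-1) ^ a * g.choose a) * ((-1) ^ b * (f - g).choose b) := by
  by_cases hab : a ≤ g ∧ b ≤ f - g
  · obtain ⟨i, rfl⟩ := Nat.exists_eq_add_of_le hab.1
    obtain ⟨j, rfl⟩ : ∃ j, f = a + i + (b + j) := ⟨f - (a + i) - b, by omega⟩
    have hchoose : endChoose (a + i + (b + j)) (a + i) a b = (i + j).choose i := by
      rw [endChoose, ← chooseZ_natCast]
      congr 1 <;> push_cast <;> ring
    rw [hchoose, endWeight, show a + i + (b + j) - a - b = i + j by omega,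
      show a + i + (b + j) - (a + i) = b + j by omega, Nat.cast_choose ℝ (Nat.le_add_right i j),
      Nat.cast_choose ℝ (Nat.le_add_right (a + i) (b + j)),
      Nat.cast_choose ℝ (Nat.le_add_right a i), Nat.cast_choose ℝ (Nat.le_add_right b j)]
    simp only [Nat.add_sub_cancel_left]
    field_simp
    ring_nf
    simp [pow_mul']
  · rw [endChoose, chooseZ_eq_zero (by omega)]
    rcases not_and_or.1 hab with h | h
    · simp [Nat.choose_eq_zero_of_lt (not_le.1 h)]
    · simp [Nat.choose_eq_zero_of_lt (not_le.1 h)]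

theorem sum_compositionWeight (n : ℕ) :
    ∑ c : Composition n, compositionWeight c.blocks = (-1) ^ n / n ! := by
  induction n using Nat.strong_induction_on with
  | _ n ih =>
  rcases eq_or_ne n 0 with rfl | hn
  · rw [Composition.sum_eq_of_eq_zero rfl]
    simp [compositionWeight]
  have hcons : ∀ a ∈ Icc 1 n,
      ∑ c : Composition (n - a), compositionWeight (a :: c.blocks) = -endWeight n a 0 := by
    intro a ha
    rw [sum_congr rfl fun c _ => compositionWeight_cons a c.blocks, ← mul_sum,
      ih (n - a) (by grind)]
    simp [endWeight]
    ring
  have hendWeight : ∀ a ∈ Icc 1 n,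
      endWeight n a 0 = (-1) ^ n / n ! * ((-1) ^ a * n.choose a) := by
    intro a ha
    have hone : endChoose n n a 0 = 1 := by
      rw [endChoose, show (n : ℤ) - a - (0 : ℕ) = (n - a : ℕ) by grind,
        show (n : ℤ) - a = (n - a : ℕ) by grind, chooseZ_natCast, Nat.choose_self, Nat.cast_one]
    simpa [hone] using endWeight_mul_endChoose (le_refl n) a 0
  rw [Composition.sum_eq_sum_Icc_sum_cons hn, sum_congr rfl hcons, sum_neg_distrib,
    sum_congr rfl hendWeight, ← mul_sum, sum_Icc_neg_one_pow_mul_choose le_rfl, if_neg hn]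
  ring

theorem sum_compositionWeight_mul_headI {n : ℕ} (hn : n ≠ 0) (F : ℕ → ℝ) :
    ∑ c : Composition n, compositionWeight c.blocks * F c.blocks.headI =
      -∑ a ∈ Icc 1 n, endWeight n a 0 * F a := by
  rw [Composition.sum_eq_sum_Icc_sum_cons hn (fun l => compositionWeight l * F l.headI),
    ← sum_neg_distrib]
  refine sum_congr rfl fun a _ => ?_
  simp only [compositionWeight_cons, List.headI_cons, ← sum_mul, ← mul_sum,
    sum_compositionWeight]
  simp [endWeight]
  ring

theorem sum_compositionWeight_mul_getLastD {n : ℕ} (hn : n ≠ 0) (F : ℕ → ℝ) :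
    ∑ c : Composition n, compositionWeight c.blocks * F (c.blocks.getLastD 0) =
      -∑ b ∈ Icc 1 n, endWeight n 0 b * F b := by
  rw [← Composition.sum_blocks_reverse (fun l => compositionWeight l * F (l.getLastD 0))]
  simp only [compositionWeight_reverse, List.getLastD_reverse_zero,
    sum_compositionWeight_mul_headI hn]
  simp [endWeight]

theorem sum_compositionWeight_mul_headI_getLastD {n : ℕ} (hn : n ≠ 0) (G : ℕ → ℕ → ℝ)
    (hG : ∀ a b, n < a + b → G a b = 0) :
    ∑ c : Composition n, compositionWeight c.blocks * G c.blocks.headI (c.blocks.getLastD 0) =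
      ∑ a ∈ Icc 1 n, ∑ b ∈ Icc 1 n, endWeight n a b * G a b := by
  rw [Composition.sum_eq_sum_Icc_sum_cons hn
    (fun l => compositionWeight l * G l.headI (l.getLastD 0))]
  refine sum_congr rfl fun a ha => ?_
  obtain ⟨ha1, han⟩ := mem_Icc.1 ha
  rw [← sum_subset (Icc_subset_Icc_right (Nat.sub_le n a)) fun b hb hb' => by
    rw [hG a b (by simp at hb hb'; omega), mul_zero]]
  rcases eq_or_ne (n - a) 0 with hna | hna
  · rw [Composition.sum_eq_of_eq_zero hna
      fun l => compositionWeight (a :: l) * G (a :: l).headI ((a :: l).getLastD 0)]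
    simp [hna, hG a a (by omega)]
  have hlast : ∀ c : Composition (n - a), (a :: c.blocks).getLastD 0 = c.blocks.getLastD 0 := by
    intro c
    rw [c.blocks_eq_headI_cons_tail hna]
    simp
  simp only [compositionWeight_cons, List.headI_cons, hlast, mul_assoc, ← mul_sum,
    sum_compositionWeight_mul_getLastD hna (G a)]
  rw [mul_neg, ← neg_mul, mul_sum]
  refine sum_congr rfl fun b _ => ?_
  simp [endWeight]
  ring

theorem sum_endWeight_mul_endChoose {f g : ℕ} (hf : f ≠ 0) (hg : g ≤ f) :
    endWeight f 0 0 * endChoose f g 0 0 + ∑ a ∈ Icc 1 f, endWeight f a 0 * endChoose f g a 0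
      + ∑ b ∈ Icc 1 f, endWeight f 0 b * endChoose f g 0 b
      + ∑ a ∈ Icc 1 f, ∑ b ∈ Icc 1 f, endWeight f a b * endChoose f g a b = 0 := by
  set u : ℕ → ℝ := fun a => (-1) ^ a * g.choose a
  set v : ℕ → ℝ := fun b => (-1) ^ b * (f - g).choose b
  calc
    _ = (-1) ^ f / f ! * f.choose g * (1 + ∑ a ∈ Icc 1 f, u a + ∑ b ∈ Icc 1 f, v b
          + ∑ a ∈ Icc 1 f, ∑ b ∈ Icc 1 f, u a * v b) := by
        simp only [endWeight_mul_endChoose hg, u, v, mul_add, mul_sum, pow_zero,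
          Nat.choose_zero_right, Nat.cast_one, mul_one, mul_assoc]
    _ = (-1) ^ f / f ! * f.choose g * (1 + ∑ a ∈ Icc 1 f, u a)
          * (1 + ∑ b ∈ Icc 1 f, v b) := by
        rw [← sum_mul_sum]
        ring
    _ = 0 := by
        simp only [u, v, sum_Icc_neg_one_pow_mul_choose hg,
          sum_Icc_neg_one_pow_mul_choose (Nat.sub_le f g)]
        split_ifs <;> first | omega | ring

/-- the alternating composition sum of
`H(f,g,μ_1,μ_d) = C(f,g) − C(f−μ_1,g−μ_1) − C(f−μ_d,g) + C(f−μ_1−μ_d,g−μ_1)` vanishes. -/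
theorem composition_sum_H_vanishes (f g : ℕ) (hf : 1 ≤ f) (hg : g ≤ f) :
    ∑ c : Composition f,
        ((-1 : ℝ) ^ c.length / ((c.blocks.map Nat.factorial).prod : ℝ)) *
          (chooseZ (f : ℤ) (g : ℤ)
            - chooseZ ((f : ℤ) - (c.blocks.headI : ℤ)) ((g : ℤ) - (c.blocks.headI : ℤ))
            - chooseZ ((f : ℤ) - (c.blocks.getLastD 0 : ℤ)) (g : ℤ)
            + chooseZ ((f : ℤ) - (c.blocks.headI : ℤ) - (c.blocks.getLastD 0 : ℤ))
                ((g : ℤ) - (c.blocks.headI : ℤ)))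
      = 0 := by
  have hf0 : f ≠ 0 := by omega
  calc
    _ = ∑ c : Composition f, compositionWeight c.blocks * endChoose f g 0 0
        - ∑ c : Composition f, compositionWeight c.blocks * endChoose f g c.blocks.headI 0
        - ∑ c : Composition f, compositionWeight c.blocks * endChoose f g 0 (c.blocks.getLastD 0)
        + ∑ c : Composition f,
            compositionWeight c.blocks * endChoose f g c.blocks.headI (c.blocks.getLastD 0) := by
      simp only [← sum_sub_distrib, ← sum_add_distrib, ← mul_sub, ← mul_add, endChoose,
        Nat.cast_zero, sub_zero]
      rfl
    _ = 0 := by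
      rw [← sum_mul, sum_compositionWeight,
        sum_compositionWeight_mul_headI hf0 (endChoose f g · 0),
        sum_compositionWeight_mul_getLastD hf0 (endChoose f g 0),
        sum_compositionWeight_mul_headI_getLastD hf0 _ fun a b => endChoose_eq_zero]
      simpa [endWeight] using sum_endWeight_mul_endChoose hf0 hg
end

section
/- Let n ≥ 1 and 1 ≤ f < n be integers. Then ∑_{c,d ≥ 0, c+d ≤ n} (−1)^{c+d} · C(n−c, f−c) / ((n−c−d)! c! d!) = 0, where C(a,b) = 0 when b < 0 or b > a. -/
open Finset Nat

theorem sum_range_neg_one_pow_div_factorial_mul_factorial {K : Type*} [Field K] [CharZero K]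
    {m : ℕ} (hm : m ≠ 0) :
    ∑ d ∈ range (m + 1), (-1 : K) ^ d / ((m - d)! * d ! : K) = 0 := by
  have alternating : ∑ d ∈ range (m + 1), (-1 : K) ^ d * m.choose d = 0 := by
    exact_mod_cast congrArg (Int.cast (R := K)) (Int.alternating_sum_range_choose_of_ne hm)
  calc ∑ d ∈ range (m + 1), (-1 : K) ^ d / ((m - d)! * d ! : K)
      = (∑ d ∈ range (m + 1), (-1 : K) ^ d * m.choose d) / m ! := by
        rw [sum_div]
        refine sum_congr rfl fun d hd => ?_
        have : (m ! : K) ≠ 0 := Nat.cast_ne_zero.2 m.factorial_ne_zero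
        rw [Nat.cast_choose K (Nat.le_of_lt_succ (mem_range.1 hd))]
        field_simp
    _ = 0 := by rw [alternating, zero_div]

theorem chooseZ_of_neg {a b : ℤ} (hb : b < 0) : chooseZ a b = 0 :=
  if_neg fun h => absurd h.1 (not_le.2 hb)

theorem G2_vanishes_general (n f : ℕ) (hf2 : f < n) :
    ∑ c ∈ Finset.range (n + 1), ∑ d ∈ Finset.range (n + 1 - c),
        (-1 : ℝ) ^ (c + d) * chooseZ ((n : ℤ) - c) ((f : ℤ) - c) /
          (((n - c - d).factorial : ℝ) * (c.factorial : ℝ) * (d.factorial : ℝ))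
      = 0 := by
  refine sum_eq_zero fun c hc => ?_
  obtain rfl | hcn := (Nat.le_of_lt_succ (mem_range.1 hc)).eq_or_lt
  · simp [chooseZ_of_neg (by omega : (f : ℤ) - c < 0)]
  calc ∑ d ∈ range (n + 1 - c), (-1 : ℝ) ^ (c + d) * chooseZ ((n : ℤ) - c) ((f : ℤ) - c) /
          (((n - c - d)! : ℝ) * (c ! : ℝ) * (d ! : ℝ))
      = (-1 : ℝ) ^ c * chooseZ ((n : ℤ) - c) ((f : ℤ) - c) / c ! *
          ∑ d ∈ range (n - c + 1), (-1 : ℝ) ^ d / ((n - c - d)! * d ! : ℝ) := by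
        rw [mul_sum, show n + 1 - c = n - c + 1 by omega]
        refine sum_congr rfl fun d _ => ?_
        rw [pow_add]
        ring
    _ = 0 := by rw [sum_range_neg_one_pow_div_factorial_mul_factorial (by omega), mul_zero]

/-- the vanishing of `G_2(n,f)` for `1 ≤ f < n`. -/
theorem G2_vanishes (n f : ℕ) (hf1 : 1 ≤ f) (hf2 : f < n) :
    ∑ c ∈ Finset.range (n + 1), ∑ d ∈ Finset.range (n + 1 - c),
        (-1 : ℝ) ^ (c + d) * chooseZ ((n : ℤ) - c) ((f : ℤ) - c) /
          (((n - c - d).factorial : ℝ) * (c.factorial : ℝ) * (d.factorial : ℝ))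
      = 0 :=
  G2_vanishes_general n f hf2
end

section
/- Let n be a positive integer and let I, J be subsets of {1,…,n} with |I ∪ J| ≥ a, where a is an integer with 1 ≤ a ≤ ⌈n/2⌉. Then there do not exist real numbers y_1,…,y_n ∈ [0, 1/(n−a)] satisfying simultaneously y_1 + ⋯ + y_n > 1 + 2∑_{i∈I} y_i and y_1 + ⋯ + y_n > 1 + 2∑_{j∈J} y_j. -/
/-! Adding the two inequalities and using `∑_{I ∪ J} y ≤ ∑_I y + ∑_J y` forces the coordinates
outside `I ∪ J` to carry mass more than `1`. But there are at most `n - a` of them, each at most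
`1 / (n - a)`, so their total is at most `1`. -/

open Finset

theorem Finset.sum_le_one_of_card_le_of_le_one_div {ι : Type*} {s : Finset ι} {y : ι → ℝ} {m : ℝ}
    (hs : (#s : ℝ) ≤ m) (hy : ∀ i ∈ s, y i ≤ 1 / m) : ∑ i ∈ s, y i ≤ 1 := by
  rcases le_or_gt m 0 with hm | hm
  · have hbound : 1 / m ≤ 0 := div_nonpos_of_nonneg_of_nonpos zero_le_one hm
    linarith [sum_nonpos fun i hi => (hy i hi).trans hbound]
  · calc ∑ i ∈ s, y i ≤ #s * (1 / m) := by simpa using sum_le_card_nsmul s y _ hy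
      _ ≤ m * (1 / m) := by gcongr
      _ = 1 := mul_one_div_cancel hm.ne'

theorem Finset.one_lt_sum_compl_union {ι : Type*} [Fintype ι] [DecidableEq ι] {I J : Finset ι}
    {y : ι → ℝ} (hy : ∀ i, 0 ≤ y i) (hI : 1 + 2 * ∑ i ∈ I, y i < ∑ i, y i)
    (hJ : 1 + 2 * ∑ j ∈ J, y j < ∑ i, y i) : 1 < ∑ i ∈ (I ∪ J)ᶜ, y i := by
  have hsplit := sum_add_sum_compl (I ∪ J) y
  have hunion := sum_union_inter (s₁ := I) (s₂ := J) (f := y)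
  have hinter : 0 ≤ ∑ i ∈ I ∩ J, y i := sum_nonneg fun i _ => hy i
  linarith

theorem Finset.cast_card_compl_le {ι : Type*} [Fintype ι] [DecidableEq ι] {s : Finset ι} {a : ℕ}
    (hs : a ≤ #s) : (#sᶜ : ℝ) ≤ Fintype.card ι - a := by
  have hcard : ((#s + #sᶜ : ℕ) : ℝ) = Fintype.card ι := by rw [card_add_card_compl]
  have ha : (a : ℝ) ≤ #s := by exact_mod_cast hs
  push_cast at hcard
  linarith

theorem no_two_indicator_support_general (n a : ℕ) (I J : Finset (Fin n)) (hIJ : a ≤ (I ∪ J).card) :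
    ¬ ∃ y : Fin n → ℝ,
        (∀ i, y i ∈ Set.Icc (0 : ℝ) (1 / ((n : ℝ) - (a : ℝ))))
        ∧ (∑ i, y i > 1 + 2 * ∑ i ∈ I, y i)
        ∧ (∑ i, y i > 1 + 2 * ∑ j ∈ J, y j) := by
  rintro ⟨y, hy, hI, hJ⟩
  have hcard : (#(I ∪ J)ᶜ : ℝ) ≤ n - a := by simpa using cast_card_compl_le hIJ
  have hle := sum_le_one_of_card_le_of_le_one_div hcard fun i _ => (hy i).2
  have hlt := one_lt_sum_compl_union (fun i => (hy i).1) hI hJ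
  linarith

/-- if `|I ∪ J| ≥ a` then there are no `y_i ∈ [0, 1/(n−a)]` with
`∑ y > 1 + 2∑_{i∈I} y_i` and `∑ y > 1 + 2∑_{j∈J} y_j` simultaneously. -/
theorem no_two_indicator_support (n a : ℕ) (hn : 1 ≤ n) (ha1 : 1 ≤ a)
    (ha2 : a ≤ (n + 1) / 2) (I J : Finset (Fin n)) (hIJ : a ≤ (I ∪ J).card) :
    ¬ ∃ y : Fin n → ℝ,
        (∀ i, y i ∈ Set.Icc (0 : ℝ) (1 / ((n : ℝ) - (a : ℝ))))
        ∧ (∑ i, y i > 1 + 2 * ∑ i ∈ I, y i)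
        ∧ (∑ i, y i > 1 + 2 * ∑ j ∈ J, y j) :=
  no_two_indicator_support_general n a I J hIJ
end

section
/- Let n, a be integers with 1 ≤ a ≤ ⌈n/2⌉ and n − a ≥ 1, and let I ⊆ {1,…,n}. There exist y_1,…,y_n ∈ [0, 1/(n−a)] with y_1 + ⋯ + y_n > 1 + 2∑_{i∈I} y_i if and only if |I| ≤ a − 1. -/
/-!
Every `y i` is at most `1 / (n - a)`, so the coordinates outside `I` contribute at most
`#Iᶜ / (n - a)`. If `#I ≥ a` this is at most `1`, and the strict inequality fails. If
`#I ≤ a - 1`, putting the maximal value `1 / (n - a)` outside `I` and `0` on `I` makes the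
left side `#Iᶜ / (n - a) > 1` while the right side is `1`.
-/

open Finset

section BoxedSums

variable {ι : Type*} [Fintype ι] [DecidableEq ι] {c : ℝ} (I : Finset ι)

theorem sum_le_one_add_sum_of_card_compl_le (hc : 0 < c) (hI : (#Iᶜ : ℝ) ≤ c) {y : ι → ℝ}
    (hy : ∀ i, y i ∈ Set.Icc 0 (1 / c)) : ∑ i, y i ≤ 1 + 2 * ∑ i ∈ I, y i := by
  have hI_nonneg : 0 ≤ ∑ i ∈ I, y i := sum_nonneg fun i _ => (hy i).1
  have hcompl : ∑ i ∈ Iᶜ, y i ≤ 1 :=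
    calc ∑ i ∈ Iᶜ, y i ≤ ∑ _i ∈ Iᶜ, 1 / c := sum_le_sum fun i _ => (hy i).2
      _ = #Iᶜ / c := by rw [sum_const, nsmul_eq_mul, mul_one_div]
      _ ≤ 1 := (div_le_one hc).2 hI
  rw [← sum_add_sum_compl I y]
  linarith

theorem exists_boxed_sum_gt_of_lt_card_compl (hc : 0 < c) (hI : c < #Iᶜ) :
    ∃ y : ι → ℝ, (∀ i, y i ∈ Set.Icc 0 (1 / c)) ∧ ∑ i, y i > 1 + 2 * ∑ i ∈ I, y i := by
  refine ⟨fun i => if i ∈ Iᶜ then 1 / c else 0, fun i => ?_, ?_⟩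
  · dsimp only
    split_ifs <;> simp [hc.le]
  · simp only [sum_ite_mem, univ_inter, inter_compl, card_empty, sum_const, nsmul_eq_mul,
      mul_one_div, Nat.cast_zero, zero_div, mul_zero, add_zero]
    exact (one_lt_div hc).2 hI

theorem exists_boxed_sum_gt_iff (hc : 0 < c) :
    (∃ y : ι → ℝ, (∀ i, y i ∈ Set.Icc 0 (1 / c)) ∧ ∑ i, y i > 1 + 2 * ∑ i ∈ I, y i) ↔
      c < #Iᶜ := by
  refine ⟨fun ⟨y, hy, hsum⟩ => ?_, exists_boxed_sum_gt_of_lt_card_compl I hc⟩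
  by_contra! hI
  exact (sum_le_one_add_sum_of_card_compl_le I hc hI hy).not_gt hsum

end BoxedSums

theorem valid_one_tuple_iff_general (n a : ℕ) (ha1 : 1 ≤ a)
    (hna : 1 ≤ n - a) (I : Finset (Fin n)) :
    (∃ y : Fin n → ℝ,
        (∀ i, y i ∈ Set.Icc (0 : ℝ) (1 / ((n : ℝ) - (a : ℝ))))
        ∧ ∑ i, y i > 1 + 2 * ∑ i ∈ I, y i)
      ↔ I.card ≤ a - 1 := by
  have han : a < n := by omega
  have hc : (0 : ℝ) < n - a := sub_pos.2 (by exact_mod_cast han)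
  have hcard : (#Iᶜ : ℝ) = n - #I := by
    rw [card_compl, Fintype.card_fin, Nat.cast_sub (I.card_le_univ.trans_eq (Fintype.card_fin n))]
  rw [exists_boxed_sum_gt_iff I hc, hcard, sub_lt_sub_iff_left, Nat.cast_lt]
  omega

/-- there exist `y_i ∈ [0, 1/(n−a)]` with `∑ y > 1 + 2∑_{i∈I} y_i`
if and only if `|I| ≤ a − 1`. -/
theorem valid_one_tuple_iff (n a : ℕ) (ha1 : 1 ≤ a) (ha2 : a ≤ (n + 1) / 2)
    (hna : 1 ≤ n - a) (I : Finset (Fin n)) :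
    (∃ y : Fin n → ℝ,
        (∀ i, y i ∈ Set.Icc (0 : ℝ) (1 / ((n : ℝ) - (a : ℝ))))
        ∧ ∑ i, y i > 1 + 2 * ∑ i ∈ I, y i)
      ↔ I.card ≤ a - 1 :=
  valid_one_tuple_iff_general n a ha1 hna I
end

section
/- Let n ≥ 1, let a ≤ ⌈n/2⌉, and suppose real numbers (X̄(t))_{0 ≤ t ≤ a−1} and (X(ℓ))_{0 ≤ ℓ ≤ a−1} satisfy X̄(t) = 2^{t+1} ∑_{i=0}^{a−1−t} C(n−t, i) X(i+t) for all 0 ≤ t ≤ a−1. Then 2^{n−2} (−1)^n ∑_{t=0}^{a−1} (−1)^t C(n,t) X̄(t) = 2^{n−1} (−1)^n ∑_{ℓ=0}^{a−1} (−1)^{ℓ} C(n,ℓ) X(ℓ). -/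
/-!
Substituting the formula for `X̄(t)` and exchanging the two sums, the coefficient of `X(ℓ)` in
`∑ₜ (-1)ᵗ C(n,t) X̄(t)` is `2 ∑_{t ≤ ℓ} (-2)ᵗ C(n,t) C(n-t,ℓ-t)`. Since
`C(n,t) C(n-t,ℓ-t) = C(n,ℓ) C(ℓ,t)`, the binomial theorem evaluates this to `2 (-1)^ℓ C(n,ℓ)`,
and the factor `2` is absorbed by the powers of two in front.
-/

open Finset

theorem Finset.sum_range_sum_range_sub_add_comm {M : Type*} [AddCommMonoid M] (a : ℕ)
    (f : ℕ → ℕ → M) :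
    ∑ t ∈ range a, ∑ i ∈ range (a - t), f t (i + t) =
      ∑ l ∈ range a, ∑ t ∈ range (l + 1), f t l := by
  have := sum_Ico_Ico_comm 0 a f
  simp only [← range_eq_Ico, sum_Ico_eq_sum_range] at this
  simpa only [add_comm] using this

theorem sum_pow_mul_choose_mul_choose_sub {R : Type*} [CommSemiring R] (x : R) (n l : ℕ) :
    ∑ t ∈ range (l + 1), x ^ t * n.choose t * (n - t).choose (l - t) =
      n.choose l * (x + 1) ^ l := by
  rw [add_pow, mul_sum]
  refine sum_congr rfl fun t ht => ?_
  have := Nat.choose_mul (n := n) (Nat.le_of_lt_succ (mem_range.mp ht))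
  rw [one_pow, mul_one, mul_assoc, ← Nat.cast_mul, ← this, Nat.cast_mul]
  ring

theorem sum_neg_one_pow_mul_choose_mul_eq_two_mul (n a : ℕ) (Xbar X : ℕ → ℝ)
    (h : ∀ t < a, Xbar t = 2 ^ (t + 1) *
      ∑ i ∈ range (a - t), ((n - t).choose i : ℝ) * X (i + t)) :
    ∑ t ∈ range a, (-1 : ℝ) ^ t * n.choose t * Xbar t =
      2 * ∑ l ∈ range a, (-1 : ℝ) ^ l * n.choose l * X l := by
  let f t l : ℝ := 2 * X l * ((-2) ^ t * n.choose t * (n - t).choose (l - t))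
  calc ∑ t ∈ range a, (-1 : ℝ) ^ t * n.choose t * Xbar t
      = ∑ t ∈ range a, ∑ i ∈ range (a - t), f t (i + t) := by
        refine sum_congr rfl fun t ht => ?_
        rw [h t (mem_range.mp ht), mul_sum, mul_sum]
        refine sum_congr rfl fun i _ => ?_
        simp only [f, Nat.add_sub_cancel, neg_pow (2 : ℝ), pow_succ]
        ring
    _ = ∑ l ∈ range a, 2 * X l * ∑ t ∈ range (l + 1),
          (-2 : ℝ) ^ t * n.choose t * (n - t).choose (l - t) := by
        rw [sum_range_sum_range_sub_add_comm]
        simp only [f, mul_sum]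
    _ = 2 * ∑ l ∈ range a, (-1 : ℝ) ^ l * n.choose l * X l := by
        rw [mul_sum]
        refine sum_congr rfl fun l _ => ?_
        rw [sum_pow_mul_choose_mul_choose_sub, show (-2 : ℝ) + 1 = -1 by norm_num]
        ring

theorem Xbar_to_X_general (n a : ℕ)
    (Xbar X : ℕ → ℝ)
    (h : ∀ t, t < a → Xbar t = 2 ^ (t + 1) *
      ∑ i ∈ Finset.range (a - t), ((n - t).choose i : ℝ) * X (i + t)) :
    (2 : ℝ) ^ ((n : ℤ) - 2) * (-1 : ℝ) ^ n *
        ∑ t ∈ Finset.range a, (-1 : ℝ) ^ t * (n.choose t : ℝ) * Xbar t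
      = (2 : ℝ) ^ ((n : ℤ) - 1) * (-1 : ℝ) ^ n *
        ∑ l ∈ Finset.range a, (-1 : ℝ) ^ l * (n.choose l : ℝ) * X l := by
  have h2 : (2 : ℝ) ^ ((n : ℤ) - 1) = (2 : ℝ) ^ ((n : ℤ) - 2) * 2 := by
    rw [← zpow_add_one₀ two_ne_zero]
    ring_nf
  rw [sum_neg_one_pow_mul_choose_mul_eq_two_mul n a Xbar X h, h2]
  ring

/-- combinatorial content of Lemma 7.22. -/
theorem Xbar_to_X (n a : ℕ) (hn : 1 ≤ n) (ha : a ≤ (n + 1) / 2)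
    (Xbar X : ℕ → ℝ)
    (h : ∀ t, t < a → Xbar t = 2 ^ (t + 1) *
      ∑ i ∈ Finset.range (a - t), ((n - t).choose i : ℝ) * X (i + t)) :
    (2 : ℝ) ^ ((n : ℤ) - 2) * (-1 : ℝ) ^ n *
        ∑ t ∈ Finset.range a, (-1 : ℝ) ^ t * (n.choose t : ℝ) * Xbar t
      = (2 : ℝ) ^ ((n : ℤ) - 1) * (-1 : ℝ) ^ n *
        ∑ l ∈ Finset.range a, (-1 : ℝ) ^ l * (n.choose l : ℝ) * X l :=
  Xbar_to_X_general n a Xbar X h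
end
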